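/- Define S_M = ∑_{m+n=M, m,n≥0} x^m y^n q^{C(m,2)+C(n,2)} / ((q²;q²)_m (q²;q²)_n). Then for M ≥ 0: S_{2M} = x^M y^M q^{M²-M} (-xy^{-1}q; q²)_M (-x^{-1}y q; q²)_M / (q²;q²)_{2M}, and S_{2M+1} = (x+y) x^M y^M q^{M²} (-xy^{-1}q²; q²)_M (-x^{-1}y q²; q²)_M / (q²;q²)_{2M+1}. -/
import Mathlib


open scoped BigOperators

/-- Finite q-Pochhammer symbol $(a;q)_n$. -/
noncomputable def qPoch (q a : ℂ) (n : ℕ) : ℂ := ∏ j ∈ Finset.range n, (1 - a * q ^ j)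

/-- $S_M = \sum_{m+n=M} x^m y^n q^{\binom{m}{2}+\binom{n}{2}}/((q^2;q^2)_m(q^2;q^2)_n)$. -/
noncomputable def S (q x y : ℂ) (M : ℕ) : ℂ :=
  ∑ m ∈ Finset.range (M + 1),
    x ^ m * y ^ (M - m) * q ^ (m.choose 2 + (M - m).choose 2) /
      (qPoch (q ^ 2) (q ^ 2) m * qPoch (q ^ 2) (q ^ 2) (M - m))

lemma one_sub_ne {q : ℂ} (hq : ‖q‖ < 1) (k : ℕ) (hk : k ≠ 0) : (1 : ℂ) - q ^ k ≠ 0 := by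
  intro h
  have h1 : q ^ k = 1 := by linear_combination -h
  have h2 : ‖q ^ k‖ < 1 := by
    rw [norm_pow]
    exact pow_lt_one₀ (norm_nonneg q) hq hk
  rw [h1, norm_one] at h2
  exact lt_irrefl 1 h2

lemma poch_ne {q : ℂ} (hq : ‖q‖ < 1) (n : ℕ) : qPoch (q ^ 2) (q ^ 2) n ≠ 0 := by
  unfold qPoch
  refine Finset.prod_ne_zero_iff.2 fun j _ => ?_
  have h : (q ^ 2) * (q ^ 2) ^ j = q ^ (2 * j + 2) := by ring
  rw [h]
  exact one_sub_ne hq _ (by omega)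

lemma qPoch_succ (Q a : ℂ) (n : ℕ) : qPoch Q a (n + 1) = qPoch Q a n * (1 - a * Q ^ n) :=
  Finset.prod_range_succ _ n

lemma Srec {q : ℂ} (hq : ‖q‖ < 1) (x y : ℂ) (M : ℕ) :
    (1 - q ^ (2 * M + 2)) * S q x y (M + 1) = (x + y * q ^ M) * S q (x * q) y M := by
  rw [S, S, Finset.mul_sum, Finset.mul_sum]
  have L1 : ∀ m ∈ Finset.range (M + 1 + 1),
      (1 - q ^ (2 * M + 2)) * (x ^ m * y ^ (M + 1 - m) * q ^ (m.choose 2 + (M + 1 - m).choose 2) /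
          (qPoch (q ^ 2) (q ^ 2) m * qPoch (q ^ 2) (q ^ 2) (M + 1 - m)))
      = (fun m => (1 - q ^ (2 * m)) *
            (x ^ m * y ^ (M + 1 - m) * q ^ (m.choose 2 + (M + 1 - m).choose 2) /
              (qPoch (q ^ 2) (q ^ 2) m * qPoch (q ^ 2) (q ^ 2) (M + 1 - m)))) m
        + (fun m => q ^ (2 * m) * (1 - q ^ (2 * (M + 1 - m))) *
            (x ^ m * y ^ (M + 1 - m) * q ^ (m.choose 2 + (M + 1 - m).choose 2) /
              (qPoch (q ^ 2) (q ^ 2) m * qPoch (q ^ 2) (q ^ 2) (M + 1 - m)))) m := by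
    intro m hm
    have hm' : m ≤ M + 1 := by
      have := Finset.mem_range.mp hm; omega
    have h1 : 2 * M + 2 = 2 * m + 2 * (M + 1 - m) := by omega
    rw [h1, pow_add]
    ring
  rw [Finset.sum_congr rfl L1, Finset.sum_add_distrib,
    Finset.sum_range_succ (fun m => q ^ (2 * m) * (1 - q ^ (2 * (M + 1 - m))) *
            (x ^ m * y ^ (M + 1 - m) * q ^ (m.choose 2 + (M + 1 - m).choose 2) /
              (qPoch (q ^ 2) (q ^ 2) m * qPoch (q ^ 2) (q ^ 2) (M + 1 - m)))) (M + 1),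
    Finset.sum_range_succ' (fun m => (1 - q ^ (2 * m)) *
            (x ^ m * y ^ (M + 1 - m) * q ^ (m.choose 2 + (M + 1 - m).choose 2) /
              (qPoch (q ^ 2) (q ^ 2) m * qPoch (q ^ 2) (q ^ 2) (M + 1 - m)))) (M + 1)]
  simp only [Nat.sub_self, Nat.mul_zero, pow_zero, sub_self, zero_mul, mul_zero, add_zero]
  rw [← Finset.sum_add_distrib]
  refine Finset.sum_congr rfl fun m hm => ?_
  have hm' : m ≤ M := by have := Finset.mem_range.mp hm; omega
  obtain ⟨k, hk⟩ : ∃ k, M = m + k := ⟨M - m, by omega⟩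
  subst hk
  have e1 : m + k + 1 - (m + 1) = k := by omega
  have e2 : m + k + 1 - m = k + 1 := by omega
  have e3 : m + k - m = k := by omega
  have c1 : (m + 1).choose 2 = m.choose 2 + m := by
    rw [Nat.choose_succ_succ, Nat.choose_one_right, Nat.add_comm]
  have c2 : (k + 1).choose 2 = k.choose 2 + k := by
    rw [Nat.choose_succ_succ, Nat.choose_one_right, Nat.add_comm]
  simp only [e1, e2, e3, c1, c2, qPoch_succ]
  have d1 : (1 : ℂ) - q ^ 2 * (q ^ 2) ^ m ≠ 0 := by
    rw [show (q : ℂ) ^ 2 * ((q : ℂ) ^ 2) ^ m = q ^ (2 * m + 2) from by ring]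
    exact one_sub_ne hq _ (by omega)
  have d2 : (1 : ℂ) - q ^ 2 * (q ^ 2) ^ k ≠ 0 := by
    rw [show (q : ℂ) ^ 2 * ((q : ℂ) ^ 2) ^ k = q ^ (2 * k + 2) from by ring]
    exact one_sub_ne hq _ (by omega)
  have p1 := poch_ne hq (q := q) m
  have p2 := poch_ne hq (q := q) k
  field_simp
  ring

lemma lemA {q : ℂ} (hq : ‖q‖ < 1) : ∀ (M : ℕ) (x y : ℂ),
    S q x y M = (∏ j ∈ Finset.range M, (x * q ^ j + y * q ^ (M - 1 - j))) /
      qPoch (q ^ 2) (q ^ 2) M := by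
  intro M
  induction M with
  | zero => intro x y; simp [S, qPoch]
  | succ M ih =>
    intro x y
    have hD : (1 : ℂ) - q ^ (2 * M + 2) ≠ 0 := one_sub_ne hq _ (by omega)
    have hS : S q x y (M + 1) = (x + y * q ^ M) * S q (x * q) y M / (1 - q ^ (2 * M + 2)) := by
      rw [eq_div_iff hD]
      linear_combination Srec hq x y M
    have hP : (∏ j ∈ Finset.range (M + 1), (x * q ^ j + y * q ^ (M + 1 - 1 - j)))
        = (x + y * q ^ M) * ∏ j ∈ Finset.range M, ((x * q) * q ^ j + y * q ^ (M - 1 - j)) := by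
      rw [Finset.prod_range_succ']
      have e0 : x * q ^ 0 + y * q ^ (M + 1 - 1 - 0) = x + y * q ^ M := by
        norm_num
      rw [e0, mul_comm]
      congr 1
      refine Finset.prod_congr rfl fun j hj => ?_
      have e1 : M + 1 - 1 - (j + 1) = M - 1 - j := by omega
      rw [e1, pow_succ]
      ring
    rw [hS, ih (x * q) y, hP, qPoch_succ]
    have hfac : (1 : ℂ) - q ^ 2 * (q ^ 2) ^ M = 1 - q ^ (2 * M + 2) := by ring_nf
    rw [hfac]
    have hpoch := poch_ne hq (q := q) M
    field_simp

lemma lemB (q : ℂ) : ∀ (M : ℕ) (x y : ℂ),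
    (∏ j ∈ Finset.range (2 * M), (x * q ^ j + y * q ^ (2 * M - 1 - j)))
      = q ^ (M ^ 2 - M) *
        ∏ k ∈ Finset.range M, ((x + y * q ^ (2 * k + 1)) * (y + x * q ^ (2 * k + 1))) := by
  intro M
  induction M with
  | zero => intro x y; simp
  | succ M ih =>
    intro x y
    rw [show 2 * (M + 1) = 2 * M + 1 + 1 from by ring]
    rw [Finset.prod_range_succ, Finset.prod_range_succ']
    have e0 : x * q ^ 0 + y * q ^ (2 * M + 1 + 1 - 1 - 0) = x + y * q ^ (2 * M + 1) := by
      norm_num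
    have eL : x * q ^ (2 * M + 1) + y * q ^ (2 * M + 1 + 1 - 1 - (2 * M + 1))
        = x * q ^ (2 * M + 1) + y := by
      have : 2 * M + 1 + 1 - 1 - (2 * M + 1) = 0 := by omega
      rw [this, pow_zero, mul_one]
    have hmid : ∀ j ∈ Finset.range (2 * M),
        x * q ^ (j + 1) + y * q ^ (2 * M + 1 + 1 - 1 - (j + 1))
          = (x * q) * q ^ j + (y * q) * q ^ (2 * M - 1 - j) := by
      intro j hj
      have hj' : j < 2 * M := Finset.mem_range.mp hj
      have e1 : 2 * M + 1 + 1 - 1 - (j + 1) = (2 * M - 1 - j) + 1 := by omega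
      rw [e1, pow_succ, pow_succ]
      ring
    rw [e0, eL, Finset.prod_congr rfl hmid, ih (x * q) (y * q)]
    have hmid2 : ∀ k ∈ Finset.range M,
        (x * q + y * q * q ^ (2 * k + 1)) * (y * q + x * q * q ^ (2 * k + 1))
          = q ^ 2 * ((x + y * q ^ (2 * k + 1)) * (y + x * q ^ (2 * k + 1))) := by
      intro k _; ring
    rw [Finset.prod_congr rfl hmid2, Finset.prod_mul_distrib, Finset.prod_const,
      Finset.card_range, Finset.prod_range_succ]
    have hpow : (q : ℂ) ^ ((M + 1) ^ 2 - (M + 1)) = q ^ (M ^ 2 - M) * (q ^ 2) ^ M := by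
      rw [← pow_mul, ← pow_add]
      congr 1
      have hM : M ≤ M ^ 2 := Nat.le_self_pow two_ne_zero M
      have hM1 : M + 1 ≤ (M + 1) ^ 2 := Nat.le_self_pow two_ne_zero _
      zify [hM, hM1]
      ring
    rw [hpow]
    ring

lemma lemC (q : ℂ) : ∀ (M : ℕ) (x y : ℂ),
    (∏ j ∈ Finset.range (2 * M + 1), (x * q ^ j + y * q ^ (2 * M + 1 - 1 - j)))
      = (x + y) * q ^ (M ^ 2) *
        ∏ k ∈ Finset.range M, ((x + y * q ^ (2 * k + 2)) * (y + x * q ^ (2 * k + 2))) := by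
  intro M
  induction M with
  | zero => intro x y; simp
  | succ M ih =>
    intro x y
    rw [show 2 * (M + 1) + 1 = 2 * M + 1 + 1 + 1 from by ring]
    rw [Finset.prod_range_succ, Finset.prod_range_succ']
    have e0 : x * q ^ 0 + y * q ^ (2 * M + 1 + 1 + 1 - 1 - 0) = x + y * q ^ (2 * M + 2) := by
      norm_num
    have eL : x * q ^ (2 * M + 1 + 1) + y * q ^ (2 * M + 1 + 1 + 1 - 1 - (2 * M + 1 + 1))
        = x * q ^ (2 * M + 2) + y := by
      have h1 : 2 * M + 1 + 1 + 1 - 1 - (2 * M + 1 + 1) = 0 := by omega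
      have h2 : 2 * M + 1 + 1 = 2 * M + 2 := by omega
      rw [h1, h2, pow_zero, mul_one]
    have hmid : ∀ j ∈ Finset.range (2 * M + 1),
        x * q ^ (j + 1) + y * q ^ (2 * M + 1 + 1 + 1 - 1 - (j + 1))
          = (x * q) * q ^ j + (y * q) * q ^ (2 * M + 1 - 1 - j) := by
      intro j hj
      have hj' : j < 2 * M + 1 := Finset.mem_range.mp hj
      have e1 : 2 * M + 1 + 1 + 1 - 1 - (j + 1) = (2 * M + 1 - 1 - j) + 1 := by omega
      rw [e1, pow_succ, pow_succ]
      ring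
    rw [e0, eL, Finset.prod_congr rfl hmid, ih (x * q) (y * q)]
    have hmid2 : ∀ k ∈ Finset.range M,
        (x * q + y * q * q ^ (2 * k + 2)) * (y * q + x * q * q ^ (2 * k + 2))
          = q ^ 2 * ((x + y * q ^ (2 * k + 2)) * (y + x * q ^ (2 * k + 2))) := by
      intro k _; ring
    rw [Finset.prod_congr rfl hmid2, Finset.prod_mul_distrib, Finset.prod_const,
      Finset.card_range, Finset.prod_range_succ]
    have hpow : (q : ℂ) ^ ((M + 1) ^ 2) = q ^ (M ^ 2) * (q ^ 2) ^ M * q := by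
      rw [← pow_mul, ← pow_add, ← pow_succ]
      congr 1
      ring
    rw [hpow]
    ring

lemma pochX {q x y : ℂ} (hx : x ≠ 0) (M c : ℕ) :
    x ^ M * qPoch (q ^ 2) (-(x⁻¹ * y * q ^ c)) M
      = ∏ k ∈ Finset.range M, (x + y * q ^ (2 * k + c)) := by
  rw [qPoch, ← Finset.card_range M, ← Finset.prod_const, Finset.card_range,
    ← Finset.prod_mul_distrib]
  refine Finset.prod_congr rfl fun k _ => ?_
  have hxx : x * x⁻¹ = 1 := mul_inv_cancel₀ hx
  have : x * (1 - -(x⁻¹ * y * q ^ c) * (q ^ 2) ^ k)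
      = x + (x * x⁻¹) * (y * q ^ (2 * k + c)) := by
    rw [pow_add, ← pow_mul]
    ring
  rw [this, hxx, one_mul]

/-- Parity-split closed forms for $S_{2M}$ and $S_{2M+1}$. -/
theorem S_even_odd (q x y : ℂ) (hq : ‖q‖ < 1) (hx : x ≠ 0) (hy : y ≠ 0) (M : ℕ) :
    S q x y (2 * M)
        = x ^ M * y ^ M * q ^ (M ^ 2 - M) *
            qPoch (q ^ 2) (-(x * y⁻¹ * q)) M * qPoch (q ^ 2) (-(x⁻¹ * y * q)) M /
              qPoch (q ^ 2) (q ^ 2) (2 * M) ∧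
    S q x y (2 * M + 1)
        = (x + y) * x ^ M * y ^ M * q ^ (M ^ 2) *
            qPoch (q ^ 2) (-(x * y⁻¹ * q ^ 2)) M * qPoch (q ^ 2) (-(x⁻¹ * y * q ^ 2)) M /
              qPoch (q ^ 2) (q ^ 2) (2 * M + 1) := by
  have hx1 : x ^ M * qPoch (q ^ 2) (-(x⁻¹ * y * q)) M
      = ∏ k ∈ Finset.range M, (x + y * q ^ (2 * k + 1)) := by
    have := pochX (q := q) (y := y) hx M 1
    simpa using this
  have hy1 : y ^ M * qPoch (q ^ 2) (-(y⁻¹ * x * q)) M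
      = ∏ k ∈ Finset.range M, (y + x * q ^ (2 * k + 1)) := by
    have := pochX (q := q) (x := y) (y := x) hy M 1
    simpa using this
  have hx2 : x ^ M * qPoch (q ^ 2) (-(x⁻¹ * y * q ^ 2)) M
      = ∏ k ∈ Finset.range M, (x + y * q ^ (2 * k + 2)) :=
    pochX (q := q) (y := y) hx M 2
  have hy2 : y ^ M * qPoch (q ^ 2) (-(y⁻¹ * x * q ^ 2)) M
      = ∏ k ∈ Finset.range M, (y + x * q ^ (2 * k + 2)) :=
    pochX (q := q) (x := y) (y := x) hy M 2
  have hyx1 : qPoch (q ^ 2) (-(x * y⁻¹ * q)) M = qPoch (q ^ 2) (-(y⁻¹ * x * q)) M := by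
    rw [show x * y⁻¹ = y⁻¹ * x from mul_comm _ _]
  have hyx2 : qPoch (q ^ 2) (-(x * y⁻¹ * q ^ 2)) M = qPoch (q ^ 2) (-(y⁻¹ * x * q ^ 2)) M := by
    rw [show x * y⁻¹ = y⁻¹ * x from mul_comm _ _]
  constructor
  · rw [lemA hq (2 * M) x y, lemB q M x y]
    congr 1
    rw [hyx1]
    symm
    calc x ^ M * y ^ M * q ^ (M ^ 2 - M) * qPoch (q ^ 2) (-(y⁻¹ * x * q)) M *
          qPoch (q ^ 2) (-(x⁻¹ * y * q)) M
        = q ^ (M ^ 2 - M) * ((x ^ M * qPoch (q ^ 2) (-(x⁻¹ * y * q)) M) *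
            (y ^ M * qPoch (q ^ 2) (-(y⁻¹ * x * q)) M)) := by ring
      _ = q ^ (M ^ 2 - M) *
            ∏ k ∈ Finset.range M, ((x + y * q ^ (2 * k + 1)) * (y + x * q ^ (2 * k + 1))) := by
          rw [hx1, hy1, ← Finset.prod_mul_distrib]
  · rw [lemA hq (2 * M + 1) x y, lemC q M x y]
    congr 1
    rw [hyx2]
    symm
    calc (x + y) * x ^ M * y ^ M * q ^ (M ^ 2) * qPoch (q ^ 2) (-(y⁻¹ * x * q ^ 2)) M *
          qPoch (q ^ 2) (-(x⁻¹ * y * q ^ 2)) M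
        = (x + y) * q ^ (M ^ 2) * ((x ^ M * qPoch (q ^ 2) (-(x⁻¹ * y * q ^ 2)) M) *
            (y ^ M * qPoch (q ^ 2) (-(y⁻¹ * x * q ^ 2)) M)) := by ring
      _ = (x + y) * q ^ (M ^ 2) *
            ∏ k ∈ Finset.range M, ((x + y * q ^ (2 * k + 2)) * (y + x * q ^ (2 * k + 2))) := by
          rw [hx2, hy2, ← Finset.prod_mul_distrib]
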